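/- Let μ : ℝ → [0,∞) be nonincreasing and differentiable with μ(t) → 0 as t → max, let c > 0, and suppose that for all t, n κ_n^{1/n} μ(t)^{1-1/n} ≤ (∫_{Ω_t} e^{c w} dx)^{1/n}(-μ'(t))^{1-1/n} where Ω_t = {w > t}, μ(t) = |Ω_t|, and c = (n/(n-1))λ_n with λ_n = n^{n/(n-1)} κ_n^{1/(n-1)}. If I = ∫_{ℝ^n} e^{c w} dx is finite and positive, then I ≥ 1. -/

import Mathlib

/-!
Put `F t = ∫_{w > t} e^{c w}` and `a = n / (n - 1)`. Comparing `e^{c w}` with `e^{c s}` and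
`e^{c t}` on the slab `{s < w ≤ t}` gives `F' = e^{c t} μ'`, and raising the hypothesis to the
power `a` gives `c μ ≤ a F^{a-1} (-μ')`. Hence `F - e^{c t} μ - F^a` is nondecreasing; it vanishes
at `t = max w`, so `F s - e^{c s} μ s ≤ F s ^ a ≤ I ^ a` for all `s ≤ max w`. The left side is
`∫ (e^{c w} - e^{c s})⁺`, which tends to `I` as `s → -∞` by dominated convergence. Thus
`I ≤ I ^ a` with `a > 1`, so `I ≥ 1`.
-/

open MeasureTheory Filter Real Set Topology

theorem slope_mem_Icc_of_sub_mem_Icc {F μ g : ℝ → ℝ} {s u : ℝ} (hsu : s < u)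
    (h : F s - F u ∈ Icc (g s * (μ s - μ u)) (g u * (μ s - μ u))) :
    slope F s u ∈ Icc (g u * slope μ s u) (g s * slope μ s u) := by
  have hd : 0 < u - s := sub_pos.2 hsu
  rw [slope_def_field, slope_def_field, ← mul_div_assoc, ← mul_div_assoc]
  constructor
  · rw [div_le_div_iff_of_pos_right hd]; linarith [h.2]
  · rw [div_le_div_iff_of_pos_right hd]; linarith [h.1]

theorem hasDerivAt_of_sub_mem_Icc {F μ g : ℝ → ℝ} {μ' t : ℝ} (hμ : HasDerivAt μ μ' t)
    (hg : ContinuousAt g t)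
    (h : ∀ s u, s ≤ u → F s - F u ∈ Icc (g s * (μ s - μ u)) (g u * (μ s - μ u))) :
    HasDerivAt F (g t * μ') t := by
  rw [hasDerivAt_iff_tendsto_slope] at hμ ⊢
  have hg' : Tendsto g (𝓝[≠] t) (𝓝 (g t)) := hg.tendsto.mono_left nhdsWithin_le_nhds
  have hlo : Tendsto (fun y => min (g t * slope μ t y) (g y * slope μ t y)) (𝓝[≠] t)
      (𝓝 (g t * μ')) := by
    simpa using ((tendsto_const_nhds (x := g t)).mul hμ).min (hg'.mul hμ)
  have hhi : Tendsto (fun y => max (g t * slope μ t y) (g y * slope μ t y)) (𝓝[≠] t)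
      (𝓝 (g t * μ')) := by
    simpa using ((tendsto_const_nhds (x := g t)).mul hμ).max (hg'.mul hμ)
  have hmem : ∀ᶠ y in 𝓝[≠] t, slope F t y ∈ uIcc (g t * slope μ t y) (g y * slope μ t y) := by
    filter_upwards [self_mem_nhdsWithin] with y hy
    rcases lt_or_gt_of_ne hy with hyt | hty
    · rw [slope_comm F, slope_comm μ]
      exact Icc_subset_uIcc (slope_mem_Icc_of_sub_mem_Icc hyt (h y t hyt.le))
    · exact Icc_subset_uIcc' (slope_mem_Icc_of_sub_mem_Icc hty (h t y hty.le))
  exact tendsto_of_tendsto_of_tendsto_of_le_of_le' hlo hhi (hmem.mono fun y hy => hy.1)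
    (hmem.mono fun y hy => hy.2)

theorem sub_exp_mul_le_rpow_of_hasDerivAt {F μ μ' : ℝ → ℝ} {a c T s : ℝ} (ha : 1 ≤ a)
    (hμ : ∀ t, HasDerivAt μ (μ' t) t) (hF : ∀ t, HasDerivAt F (exp (c * t) * μ' t) t)
    (hkey : ∀ t, c * μ t ≤ a * F t ^ (a - 1) * -μ' t) (hFT : F T = 0) (hμT : μ T = 0)
    (hs : s ≤ T) : F s - exp (c * s) * μ s ≤ F s ^ a := by
  set Ψ := fun t => F t - exp (c * t) * μ t - F t ^ a
  have hΨ : ∀ t, HasDerivAt Ψ (exp (c * t) * (a * F t ^ (a - 1) * -μ' t - c * μ t)) t := by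
    intro t
    have hexp : HasDerivAt (fun t => exp (c * t)) (exp (c * t) * c) t := by
      simpa using ((hasDerivAt_id t).const_mul c).exp
    exact (((hF t).sub (hexp.mul (hμ t))).sub ((hF t).rpow_const (Or.inr ha))).congr_deriv
      (by ring)
  have hΨs := monotone_of_hasDerivAt_nonneg hΨ
    (fun t => mul_nonneg (exp_pos _).le (sub_nonneg.2 (hkey t))) hs
  simp only [Ψ, hFT, hμT, zero_rpow (by linarith : a ≠ 0)] at hΨs
  linarith

theorem rpow_conj_mul_le_of_le {r k x y z : ℝ} (hr : 1 < r) (hk : 0 ≤ k) (hx : 0 ≤ x)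
    (hy : 0 ≤ y) (hz : 0 ≤ z)
    (h : r * k ^ (1 / r) * x ^ (1 - 1 / r) ≤ y ^ (1 / r) * z ^ (1 - 1 / r)) :
    r ^ (r / (r - 1)) * k ^ (1 / (r - 1)) * x ≤ y ^ (r / (r - 1) - 1) * z := by
  have hr0 : 0 < r := by linarith
  have hr1 : r - 1 ≠ 0 := by linarith
  have e₁ : 1 / r * (r / (r - 1)) = 1 / (r - 1) := by field_simp
  have e₂ : (1 - 1 / r) * (r / (r - 1)) = 1 := by field_simp
  have e₃ : r / (r - 1) - 1 = 1 / (r - 1) := by field_simp; ring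
  have h' := rpow_le_rpow (by positivity) h (by positivity : 0 ≤ r / (r - 1))
  rw [e₃]
  rwa [mul_rpow (by positivity) (by positivity), mul_rpow (by positivity) (by positivity),
    mul_rpow (by positivity) (by positivity), ← rpow_mul hk, ← rpow_mul hx, ← rpow_mul hy,
    ← rpow_mul hz, e₁, e₂, rpow_one, rpow_one] at h'

section Superlevel

variable {α : Type*} [MeasurableSpace α] {ν : Measure α} {v : α → ℝ} {c : ℝ}

theorem AEMeasurable.of_exp_mul (hc : c ≠ 0) (h : AEMeasurable (fun x => exp (c * v x)) ν) :
    AEMeasurable v ν := by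
  simpa [Function.comp_def, mul_div_cancel_left₀ _ hc] using
    (measurable_log.comp_aemeasurable h).div_const c

theorem measure_superlevel_lt_top (hc : 0 ≤ c) (hint : Integrable (fun x => exp (c * v x)) ν)
    (t : ℝ) : ν {x | t < v x} < ⊤ :=
  (measure_mono fun _ hx => exp_le_exp.2 (mul_le_mul_of_nonneg_left hx.le hc)).trans_lt
    (hint.measure_ge_lt_top (exp_pos (c * t)))

theorem setIntegral_superlevel_sub_mem_Icc (hc : 0 ≤ c) (hv : AEMeasurable v ν)
    (hint : Integrable (fun x => exp (c * v x)) ν) {s t : ℝ} (hst : s ≤ t) :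
    (∫ x in {x | s < v x}, exp (c * v x) ∂ν) - ∫ x in {x | t < v x}, exp (c * v x) ∂ν ∈
      Icc (exp (c * s) * (ν.real {x | s < v x} - ν.real {x | t < v x}))
        (exp (c * t) * (ν.real {x | s < v x} - ν.real {x | t < v x})) := by
  have hsub : {x | t < v x} ⊆ {x | s < v x} := fun x hx => hst.trans_lt hx
  have hnull : ∀ r, NullMeasurableSet {x | r < v x} ν := fun r =>
    nullMeasurableSet_lt aemeasurable_const hv
  have hslab : ∀ f : α → ℝ, IntegrableOn f {x | s < v x} ν →
      (∫ x in {x | s < v x}, f x ∂ν) - ∫ x in {x | t < v x}, f x ∂ν =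
        ∫ x in {x | s < v x} \ {x | t < v x}, f x ∂ν := fun f hf =>
    (setIntegral_sdiff₀ (hnull t) hf hsub).symm
  have hconst : ∀ r, exp (c * r) * (ν.real {x | s < v x} - ν.real {x | t < v x}) =
      ∫ _ in {x | s < v x} \ {x | t < v x}, exp (c * r) ∂ν := fun r => by
    rw [← hslab _ (integrableOn_const (measure_superlevel_lt_top hc hint s).ne),
      setIntegral_const, setIntegral_const, smul_eq_mul, smul_eq_mul, mul_sub, mul_comm,
      mul_comm (exp _)]
  rw [hslab _ hint.integrableOn, hconst, hconst]
  have hD : NullMeasurableSet ({x | s < v x} \ {x | t < v x}) ν := (hnull s).diff (hnull t)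
  have hconstD : ∀ r, IntegrableOn (fun _ => exp (c * r)) ({x | s < v x} \ {x | t < v x}) ν :=
    fun r => (integrableOn_const (measure_superlevel_lt_top hc hint s).ne).mono_set sdiff_subset
  exact ⟨setIntegral_mono_on₀ (hconstD s) hint.integrableOn hD fun x hx =>
      exp_le_exp.2 (mul_le_mul_of_nonneg_left hx.1.le hc),
    setIntegral_mono_on₀ hint.integrableOn (hconstD t) hD fun x hx =>
      exp_le_exp.2 (mul_le_mul_of_nonneg_left (not_lt.1 hx.2) hc)⟩

theorem tendsto_setIntegral_superlevel_sub_atBot (hc : 0 < c) (hv : AEMeasurable v ν)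
    (hint : Integrable (fun x => exp (c * v x)) ν) :
    Tendsto (fun s => (∫ x in {x | s < v x}, exp (c * v x) ∂ν) -
      exp (c * s) * ν.real {x | s < v x}) atBot (𝓝 (∫ x, exp (c * v x) ∂ν)) := by
  have hnull : ∀ s, NullMeasurableSet {x | s < v x} ν := fun s =>
    nullMeasurableSet_lt aemeasurable_const hv
  have hrepr : ∀ s, (∫ x in {x | s < v x}, exp (c * v x) ∂ν) -
      exp (c * s) * ν.real {x | s < v x} =
        ∫ x, {x | s < v x}.indicator (fun x => exp (c * v x) - exp (c * s)) x ∂ν := fun s => by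
    rw [integral_indicator₀ (hnull s), integral_sub hint.integrableOn
      (integrableOn_const (measure_superlevel_lt_top hc.le hint s).ne), setIntegral_const,
      smul_eq_mul, mul_comm]
  simp_rw [hrepr]
  refine tendsto_integral_filter_of_dominated_convergence (fun x => exp (c * v x))
    (Eventually.of_forall fun s =>
      (hint.1.sub aestronglyMeasurable_const).indicator₀ (hnull s))
    (Eventually.of_forall fun s => ae_of_all _ fun x => ?_) hint (ae_of_all _ fun x => ?_)
  · by_cases hx : s < v x
    · have : exp (c * s) ≤ exp (c * v x) := exp_le_exp.2 (mul_le_mul_of_nonneg_left hx.le hc.le)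
      rw [indicator_of_mem (show x ∈ {x | s < v x} from hx), norm_of_nonneg (sub_nonneg.2 this)]
      linarith [exp_pos (c * s)]
    · rw [indicator_of_notMem (show x ∉ {x | s < v x} from hx), norm_zero]
      exact (exp_pos _).le
  · have hlim : Tendsto (fun s => exp (c * v x) - exp (c * s)) atBot (𝓝 (exp (c * v x))) := by
      simpa using tendsto_const_nhds.sub
        (tendsto_exp_atBot.comp (tendsto_id.const_mul_atBot hc))
    refine hlim.congr' ?_
    filter_upwards [eventually_lt_atBot (v x)] with s hs
    rw [indicator_of_mem (show x ∈ {x | s < v x} from hs)]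

end Superlevel

theorem level_set_lower_bound_general (n : ℕ) (hn : 2 ≤ n)
    (κ lamn c : ℝ) (hκ : 0 < κ)
    (hlam : lamn = (n : ℝ) ^ ((n : ℝ) / (n - 1)) * κ ^ ((1 : ℝ) / (n - 1)))
    (hc : c = ((n : ℝ) / (n - 1)) * lamn)
    (w : EuclideanSpace ℝ (Fin n) → ℝ) (T : ℝ)
    (hT : ∃ x₀, w x₀ = T ∧ ∀ x, w x ≤ T)
    (μ μ' : ℝ → ℝ)
    (hμ : ∀ t, μ t = (volume {x : EuclideanSpace ℝ (Fin n) | t < w x}).toReal)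
    (hmono : Antitone μ)
    (hderiv : ∀ t, HasDerivAt μ (μ' t) t)
    (hineq : ∀ t : ℝ,
      (n : ℝ) * κ ^ ((1 : ℝ) / n) * (μ t) ^ (1 - (1 : ℝ) / n) ≤
        (∫ x in {x : EuclideanSpace ℝ (Fin n) | t < w x},
            Real.exp (c * w x)) ^ ((1 : ℝ) / n) * (-μ' t) ^ (1 - (1 : ℝ) / n))
    (hint : Integrable (fun x : EuclideanSpace ℝ (Fin n) => Real.exp (c * w x)))
    (hpos : 0 < ∫ x : EuclideanSpace ℝ (Fin n), Real.exp (c * w x)) :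
    1 ≤ ∫ x : EuclideanSpace ℝ (Fin n), Real.exp (c * w x) := by
  set a : ℝ := n / (n - 1)
  set F : ℝ → ℝ := fun t => ∫ x in {x | t < w x}, exp (c * w x)
  have hn1 : (1 : ℝ) < n := by exact_mod_cast hn
  have ha : 1 < a := (one_lt_div (by linarith)).2 (by linarith)
  have hc0 : 0 < c := by rw [hc, hlam]; positivity
  have hw : AEMeasurable w := hint.1.aemeasurable.of_exp_mul hc0.ne'
  have hμr : ∀ t, volume.real {x | t < w x} = μ t := fun t => (hμ t).symm
  have hF : ∀ t, HasDerivAt F (exp (c * t) * μ' t) t := fun t =>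
    hasDerivAt_of_sub_mem_Icc (g := fun t => exp (c * t)) (hderiv t) (by fun_prop)
      fun s u hsu => by
        simpa only [hμr] using setIntegral_superlevel_sub_mem_Icc hc0.le hw hint hsu
  have hkey : ∀ t, c * μ t ≤ a * F t ^ (a - 1) * -μ' t := fun t => by
    have : (n : ℝ) ^ a * κ ^ (1 / (n - 1 : ℝ)) * μ t ≤ F t ^ (a - 1) * -μ' t :=
      rpow_conj_mul_le_of_le hn1 hκ.le (hμ t ▸ ENNReal.toReal_nonneg)
        (integral_nonneg fun x => (exp_pos _).le)
        (neg_nonneg.2 ((hderiv t).deriv ▸ hmono.deriv_nonpos)) (hineq t)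
    rw [hc, mul_assoc, mul_assoc, hlam]
    exact mul_le_mul_of_nonneg_left this (zero_le_one.trans ha.le)
  obtain ⟨-, -, hwT⟩ := hT
  have hempty : {x | T < w x} = ∅ := eq_empty_of_forall_notMem fun x hx => (hwT x).not_gt hx
  have hle : ∀ s ≤ T, F s - exp (c * s) * μ s ≤ F s ^ a := fun s hs =>
    sub_exp_mul_le_rpow_of_hasDerivAt ha.le hderiv hF hkey (by simp [F, hempty])
      (by simp [hμ, hempty]) hs
  have hFI : ∀ s, F s ≤ ∫ x, exp (c * w x) := fun s =>
    setIntegral_le_integral hint (ae_of_all _ fun x => (exp_pos _).le)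
  have hIa : ∫ x, exp (c * w x) ≤ (∫ x, exp (c * w x)) ^ a := by
    refine le_of_tendsto
      (by simpa only [hμr] using tendsto_setIntegral_superlevel_sub_atBot hc0 hw hint) ?_
    filter_upwards [eventually_le_atBot T] with s hs
    exact (hle s hs).trans
      (rpow_le_rpow (integral_nonneg fun x => (exp_pos _).le) (hFI s) (by linarith))
  exact not_lt.1 fun h => (rpow_lt_self_of_lt_one hpos h ha).not_ge hIa

theorem level_set_lower_bound (n : ℕ) (hn : 2 ≤ n)
    (κ lamn c : ℝ) (hκ : 0 < κ)
    (hlam : lamn = (n : ℝ) ^ ((n : ℝ) / (n - 1)) * κ ^ ((1 : ℝ) / (n - 1)))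
    (hc : c = ((n : ℝ) / (n - 1)) * lamn)
    (w : EuclideanSpace ℝ (Fin n) → ℝ) (T : ℝ)
    (hT : ∃ x₀, w x₀ = T ∧ ∀ x, w x ≤ T)
    (μ μ' : ℝ → ℝ)
    (hμ : ∀ t, μ t = (volume {x : EuclideanSpace ℝ (Fin n) | t < w x}).toReal)
    (hmono : Antitone μ)
    (hderiv : ∀ t, HasDerivAt μ (μ' t) t)
    (htend : Tendsto μ (nhdsWithin T (Set.Iio T)) (nhds 0))
    (hineq : ∀ t : ℝ,
      (n : ℝ) * κ ^ ((1 : ℝ) / n) * (μ t) ^ (1 - (1 : ℝ) / n) ≤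
        (∫ x in {x : EuclideanSpace ℝ (Fin n) | t < w x},
            Real.exp (c * w x)) ^ ((1 : ℝ) / n) * (-μ' t) ^ (1 - (1 : ℝ) / n))
    (hint : Integrable (fun x : EuclideanSpace ℝ (Fin n) => Real.exp (c * w x)))
    (hpos : 0 < ∫ x : EuclideanSpace ℝ (Fin n), Real.exp (c * w x)) :
    1 ≤ ∫ x : EuclideanSpace ℝ (Fin n), Real.exp (c * w x) :=
  level_set_lower_bound_general n hn κ lamn c hκ hlam hc w T hT μ μ' hμ hmono hderiv hineq hint hpos
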